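/- For every n ≥ 2, the number of equivalence classes of the n-equivalence relation on the parameter space T equals 3 + ∑_{k=3}^{n} φ(k), where φ is Euler's totient function. Equivalently, there are exactly t_n = 1 + (1/2)∑_{k=3}^{n} φ(k) stable decision criteria and t_n + 1 unstable decision criteria. -/

import Mathlib

open Real Set

/-- The parameter space `T = {(p,q) : 0 ≤ p ≤ q, p + q < 1} \ {(0,0)}`. -/
def bacT : Set (ℝ × ℝ) := {pq | 0 ≤ pq.1 ∧ pq.1 ≤ pq.2 ∧ pq.1 + pq.2 < 1 ∧ pq ≠ (0, 0)}

/-- The BAC-function `S`. -/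
noncomputable def bacS (p q : ℝ) : ℝ :=
  if p = 0 then 0 else (Real.log (1 - p) - Real.log q) / (Real.log (1 - q) - Real.log p)

/-- Transition probability of the n-fold binary asymmetric channel `BAC^n(p,q)`:
`bacPr p q x y = Pr(x|y)`. -/
noncomputable def bacPr (p q : ℝ) {n : ℕ} (x y : Fin n → Bool) : ℝ :=
  ∏ i, if x i then (if y i then 1 - q else p) else (if y i then q else 1 - p)

/-- The channels `BAC(p,q)` and `BAC(p',q')` are `n`-equivalent. -/
def nEquiv (n : ℕ) (p q p' q' : ℝ) : Prop :=
  ∀ x y z : Fin n → Bool,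
    (bacPr p q x y ≤ bacPr p q x z ↔ bacPr p' q' x y ≤ bacPr p' q' x z)

/-- A point `(p,q) ∈ T` is `n`-stable if all nearby points of `T` are `n`-equivalent to it. -/
def nStable (n : ℕ) (pq : ℝ × ℝ) : Prop :=
  ∃ ε > 0, ∀ pq' ∈ bacT, ‖pq' - pq‖ < ε → nEquiv n pq.1 pq.2 pq'.1 pq'.2

/-- The `n`-equivalence class of a point of the parameter space. -/
def eqClass (n : ℕ) (pq : ℝ × ℝ) : Set (ℝ × ℝ) :=
  {pq' ∈ bacT | nEquiv n pq.1 pq.2 pq'.1 pq'.2}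




lemma coprime_pos_of_lt {k b : ℕ} (hk : 3 ≤ k) (hc : k.Coprime b) : 1 ≤ b := by
  rcases Nat.eq_zero_or_pos b with h | h
  · subst h; simp [Nat.Coprime] at hc; omega
  · exact h


lemma gcd_self_sub {k b : ℕ} (h : b ≤ k) : Nat.gcd k (k - b) = Nat.gcd k b := by
  have h2 : Nat.gcd (k - b) b = Nat.gcd (k - b) (b + (k - b)) :=
    (Nat.gcd_add_self_right _ _).symm
  have e : b + (k - b) = k := by omega
  rw [e] at h2
  rw [Nat.gcd_comm, ← h2, Nat.gcd_sub_self_left h]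

lemma copr_self_sub {k b : ℕ} (h : b ≤ k) : k.Coprime (k - b) ↔ k.Coprime b := by
  unfold Nat.Coprime; rw [gcd_self_sub h]

lemma totient_halving {k : ℕ} (hk : 3 ≤ k) :
    2 * ((Finset.range k).filter fun b => k.Coprime b ∧ 2*b < k).card = Nat.totient k := by
  have hsplit : (Finset.range k).filter k.Coprime
      = ((Finset.range k).filter fun b => k.Coprime b ∧ 2*b < k)
        ∪ ((Finset.range k).filter fun b => k.Coprime b ∧ k < 2*b) := by
    ext b
    simp only [Finset.mem_union, Finset.mem_filter, Finset.mem_range]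
    constructor
    · rintro ⟨hb, hc⟩
      rcases Nat.lt_trichotomy (2*b) k with h | h | h
      · exact Or.inl ⟨hb, hc, h⟩
      · exfalso
        have hbdvd : b ∣ k := ⟨2, by omega⟩
        have := Nat.gcd_eq_right hbdvd
        have hc' : Nat.gcd k b = 1 := hc
        omega
      · exact Or.inr ⟨hb, hc, h⟩
    · rintro (⟨hb, hc, _⟩ | ⟨hb, hc, _⟩) <;> exact ⟨hb, hc⟩
  have hdisj : Disjoint ((Finset.range k).filter fun b => k.Coprime b ∧ 2*b < k)
      ((Finset.range k).filter fun b => k.Coprime b ∧ k < 2*b) := by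
    rw [Finset.disjoint_left]
    intro b h1 h2
    simp only [Finset.mem_filter] at h1 h2
    omega
  have hcard : ((Finset.range k).filter fun b => k.Coprime b ∧ 2*b < k).card
      = ((Finset.range k).filter fun b => k.Coprime b ∧ k < 2*b).card := by
    apply Finset.card_bij (fun b _ => k - b)
    · intro b hb
      simp only [Finset.mem_filter, Finset.mem_range] at hb ⊢
      have hb1 : 1 ≤ b := coprime_pos_of_lt hk hb.2.1
      exact ⟨by omega, (copr_self_sub (by omega)).mpr hb.2.1, by omega⟩
    · intro a ha b hb h
      simp only [Finset.mem_filter, Finset.mem_range] at ha hb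
      omega
    · intro b hb
      simp only [Finset.mem_filter, Finset.mem_range] at hb
      have hb1 : 1 ≤ b := coprime_pos_of_lt hk hb.2.1
      refine ⟨k - b, ?_, by omega⟩
      simp only [Finset.mem_filter, Finset.mem_range]
      exact ⟨by omega, (copr_self_sub (by omega)).mpr hb.2.1, by omega⟩
  rw [Nat.totient_eq_card_coprime, hsplit, Finset.card_union_of_disjoint hdisj, ← hcard]
  ring

/-- Reduced pairs (a,b), b/a ∈ (0,1], a+b ≤ n. -/
def fpairs (n : ℕ) : Finset (ℕ × ℕ) :=
  (Finset.Icc 1 n ×ˢ Finset.Icc 1 n).filter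
    fun ab => ab.1 + ab.2 ≤ n ∧ ab.2 ≤ ab.1 ∧ Nat.gcd ab.1 ab.2 = 1

lemma mem_fpairs {n : ℕ} {ab : ℕ × ℕ} :
    ab ∈ fpairs n ↔ 1 ≤ ab.1 ∧ 1 ≤ ab.2 ∧ ab.1 + ab.2 ≤ n ∧ ab.2 ≤ ab.1 ∧
      Nat.gcd ab.1 ab.2 = 1 := by
  unfold fpairs
  simp only [Finset.mem_filter, Finset.mem_product, Finset.mem_Icc]
  constructor
  · rintro ⟨⟨⟨h1,h2⟩,⟨h3,h4⟩⟩,h5,h6,h7⟩; exact ⟨h1,h3,h5,h6,h7⟩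
  · rintro ⟨h1,h3,h5,h6,h7⟩
    exact ⟨⟨⟨h1, le_trans (by omega) h5⟩, ⟨h3, by omega⟩⟩, h5, h6, h7⟩

lemma two_mul_card_fpairs {n : ℕ} (hn : 2 ≤ n) :
    2 * (fpairs n).card = 2 + ∑ k ∈ Finset.Icc 3 n, Nat.totient k := by
  induction n with
  | zero => omega
  | succ m ih =>
    rcases Nat.lt_or_ge m 2 with hm | hm
    · interval_cases m
      · omega
      · -- n = 2
        have : fpairs 2 = {(1,1)} := by decide
        rw [this]; simp
    · -- m ≥ 2, n = m+1 ≥ 3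
      have hsplit : fpairs (m+1) = fpairs m ∪ ((fpairs (m+1)).filter fun ab => ab.1 + ab.2 = m+1) := by
        ext ab
        simp only [Finset.mem_union, Finset.mem_filter, mem_fpairs]
        omega
      have hdisj : Disjoint (fpairs m) ((fpairs (m+1)).filter fun ab => ab.1 + ab.2 = m+1) := by
        rw [Finset.disjoint_left]
        intro ab h1 h2
        rw [mem_fpairs] at h1
        simp only [Finset.mem_filter] at h2
        omega
      rw [hsplit, Finset.card_union_of_disjoint hdisj, Nat.mul_add, ih hm]
      have hIcc : Finset.Icc 3 (m+1) = insert (m+1) (Finset.Icc 3 m) := by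
        rw [← Finset.insert_Icc_right_eq_Icc_add_one (by omega)]
      rw [hIcc, Finset.sum_insert (by simp)]
      have key : 2 * ((fpairs (m+1)).filter fun ab => ab.1 + ab.2 = m+1).card
          = Nat.totient (m+1) := by
        have hbij : ((fpairs (m+1)).filter fun ab => ab.1 + ab.2 = m+1).card
            = ((Finset.range (m+1)).filter fun b => (m+1).Coprime b ∧ 2*b < m+1).card := by
          apply Finset.card_bij (fun ab _ => ab.2)
          · intro ab hab
            simp only [Finset.mem_filter, mem_fpairs] at hab
            obtain ⟨⟨h1, h2, h3, h4, h5⟩, h6⟩ := hab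
            simp only [Finset.mem_filter, Finset.mem_range]
            have hg : Nat.gcd (m+1) ab.2 = 1 := by
              rw [← h6, Nat.gcd_add_self_left]; exact h5
            refine ⟨by omega, hg, ?_⟩
            rcases Nat.lt_or_ge (2*ab.2) (m+1) with h | h
            · exact h
            · exfalso
              have : ab.1 = ab.2 := by omega
              rw [this, Nat.gcd_self] at h5
              omega
          · intro a ha b hb h
            simp only [Finset.mem_filter, mem_fpairs] at ha hb
            have : a.1 = b.1 := by omega
            exact Prod.ext this h
          · intro b hb
            simp only [Finset.mem_filter, Finset.mem_range] at hb
            refine ⟨(m+1-b, b), ?_, rfl⟩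
            have hb1 : 1 ≤ b := coprime_pos_of_lt (by omega) hb.2.1
            simp only [Finset.mem_filter, mem_fpairs]
            refine ⟨⟨by omega, by omega, by omega, by omega, ?_⟩, by omega⟩
            have := Nat.gcd_add_self_left b (m+1-b)
            have e : m+1-b+b = m+1 := by omega
            rw [e] at this
            rw [← this]; exact hb.2.1
        rw [hbij]
        exact totient_halving (by omega)
      omega


def cnt {n : ℕ} (x y : Fin n → Bool) (a b : Bool) : ℕ :=
  (Finset.univ.filter fun i => x i = a ∧ y i = b).card

lemma cnt_add_cnt_false (x y : Fin n → Bool) :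
    cnt x y false false + cnt x y false true
      = (Finset.univ.filter fun i => x i = false).card := by
  unfold cnt
  have h0 : (Finset.univ.filter fun i => x i = false ∧ y i = false)
      = (Finset.univ.filter fun i => x i = false).filter (fun i => y i = false) := by
    rw [Finset.filter_filter]
  have h1 : (Finset.univ.filter fun i => x i = false ∧ y i = true)
      = (Finset.univ.filter fun i => x i = false).filter (fun i => ¬ (y i = false)) := by
    rw [Finset.filter_filter]
    apply Finset.filter_congr; intro i _; simp
  rw [h0, h1, Finset.card_filter_add_card_filter_not]

lemma cnt_add_cnt_true (x y : Fin n → Bool) :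
    cnt x y true false + cnt x y true true
      = (Finset.univ.filter fun i => x i = true).card := by
  unfold cnt
  have h0 : (Finset.univ.filter fun i => x i = true ∧ y i = false)
      = (Finset.univ.filter fun i => x i = true).filter (fun i => y i = false) := by
    rw [Finset.filter_filter]
  have h1 : (Finset.univ.filter fun i => x i = true ∧ y i = true)
      = (Finset.univ.filter fun i => x i = true).filter (fun i => ¬ (y i = false)) := by
    rw [Finset.filter_filter]
    apply Finset.filter_congr; intro i _; simp
  rw [h0, h1, Finset.card_filter_add_card_filter_not]

lemma bacPr_formula {n : ℕ} (p q : ℝ) (x y : Fin n → Bool) :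
    bacPr p q x y = (1-p)^(cnt x y false false) * q^(cnt x y false true)
      * p^(cnt x y true false) * (1-q)^(cnt x y true true) := by
  unfold bacPr cnt
  rw [← Finset.prod_filter_mul_prod_filter_not Finset.univ (fun i => x i = false)]
  have e1 : (Finset.univ.filter fun i => ¬ (x i = false))
      = (Finset.univ.filter fun i : Fin n => x i = true) := by
    apply Finset.filter_congr; intro i _; simp
  rw [e1]
  rw [← Finset.prod_filter_mul_prod_filter_not
      (Finset.univ.filter fun i : Fin n => x i = false) (fun i => y i = false)]
  rw [← Finset.prod_filter_mul_prod_filter_not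
      (Finset.univ.filter fun i : Fin n => x i = true) (fun i => y i = false)]
  rw [Finset.filter_filter, Finset.filter_filter, Finset.filter_filter, Finset.filter_filter]
  have ey1 : (Finset.univ.filter fun i : Fin n => x i = false ∧ ¬ (y i = false))
      = (Finset.univ.filter fun i : Fin n => x i = false ∧ y i = true) := by
    apply Finset.filter_congr; intro i _; simp
  have ey2 : (Finset.univ.filter fun i : Fin n => x i = true ∧ ¬ (y i = false))
      = (Finset.univ.filter fun i : Fin n => x i = true ∧ y i = true) := by
    apply Finset.filter_congr; intro i _; simp
  rw [ey1, ey2]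
  have p1 : ∏ i ∈ (Finset.univ.filter fun i : Fin n => x i = false ∧ y i = false),
      (if x i then (if y i then 1 - q else p) else (if y i then q else 1 - p))
      = (1-p)^(Finset.univ.filter fun i : Fin n => x i = false ∧ y i = false).card := by
    rw [← Finset.prod_const]
    apply Finset.prod_congr rfl
    intro i hi; simp only [Finset.mem_filter] at hi
    simp [hi.2.1, hi.2.2]
  have p2 : ∏ i ∈ (Finset.univ.filter fun i : Fin n => x i = false ∧ y i = true),
      (if x i then (if y i then 1 - q else p) else (if y i then q else 1 - p))
      = q^(Finset.univ.filter fun i : Fin n => x i = false ∧ y i = true).card := by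
    rw [← Finset.prod_const]
    apply Finset.prod_congr rfl
    intro i hi; simp only [Finset.mem_filter] at hi
    simp [hi.2.1, hi.2.2]
  have p3 : ∏ i ∈ (Finset.univ.filter fun i : Fin n => x i = true ∧ y i = false),
      (if x i then (if y i then 1 - q else p) else (if y i then q else 1 - p))
      = p^(Finset.univ.filter fun i : Fin n => x i = true ∧ y i = false).card := by
    rw [← Finset.prod_const]
    apply Finset.prod_congr rfl
    intro i hi; simp only [Finset.mem_filter] at hi
    simp [hi.2.1, hi.2.2]
  have p4 : ∏ i ∈ (Finset.univ.filter fun i : Fin n => x i = true ∧ y i = true),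
      (if x i then (if y i then 1 - q else p) else (if y i then q else 1 - p))
      = (1-q)^(Finset.univ.filter fun i : Fin n => x i = true ∧ y i = true).card := by
    rw [← Finset.prod_const]
    apply Finset.prod_congr rfl
    intro i hi; simp only [Finset.mem_filter] at hi
    simp [hi.2.1, hi.2.2]
  rw [p1, p2, p3, p4]
  ring

lemma bacPr_pos {n : ℕ} {p q : ℝ} (hp : 0 < p) (hp1 : p < 1) (hq : 0 < q) (hq1 : q < 1)
    (x y : Fin n → Bool) : 0 < bacPr p q x y := by
  rw [bacPr_formula]
  have h1 : (0:ℝ) < 1 - p := by linarith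
  have h2 : (0:ℝ) < 1 - q := by linarith
  positivity

lemma bacPr_log {n : ℕ} {p q : ℝ} (hp : 0 < p) (hp1 : p < 1) (hq : 0 < q) (hq1 : q < 1)
    (x y : Fin n → Bool) :
    Real.log (bacPr p q x y)
      = (cnt x y false false) * Real.log (1-p) + (cnt x y false true) * Real.log q
        + (cnt x y true false) * Real.log p + (cnt x y true true) * Real.log (1-q) := by
  have h1 : (0:ℝ) < 1 - p := by linarith
  have h2 : (0:ℝ) < 1 - q := by linarith
  rw [bacPr_formula]
  rw [Real.log_mul (by positivity) (by positivity), Real.log_mul (by positivity) (by positivity),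
      Real.log_mul (by positivity) (by positivity)]
  rw [Real.log_pow, Real.log_pow, Real.log_pow, Real.log_pow]

lemma bacPr_le_iff {n : ℕ} {p q : ℝ} (hp : 0 < p) (hp1 : p < 1) (hq : 0 < q) (hq1 : q < 1)
    (x y z : Fin n → Bool) :
    (bacPr p q x y ≤ bacPr p q x z ↔
      0 ≤ ((cnt x y false true : ℝ) - cnt x z false true) * (Real.log (1-p) - Real.log q)
        + ((cnt x y true false : ℝ) - cnt x z true false) * (Real.log (1-q) - Real.log p)) := by
  rw [← Real.log_le_log_iff (bacPr_pos hp hp1 hq hq1 x y) (bacPr_pos hp hp1 hq hq1 x z)]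
  rw [bacPr_log hp hp1 hq hq1, bacPr_log hp hp1 hq hq1]
  have e1 : (cnt x y false false : ℝ) + cnt x y false true
      = (cnt x z false false : ℝ) + cnt x z false true := by
    have h1 := cnt_add_cnt_false x y
    have h2 := cnt_add_cnt_false x z
    have h3 : cnt x y false false + cnt x y false true
        = cnt x z false false + cnt x z false true := by omega
    exact_mod_cast h3
  have e2 : (cnt x y true false : ℝ) + cnt x y true true
      = (cnt x z true false : ℝ) + cnt x z true true := by
    have h1 := cnt_add_cnt_true x y
    have h2 := cnt_add_cnt_true x z
    have h3 : cnt x y true false + cnt x y true true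
        = cnt x z true false + cnt x z true true := by omega
    exact_mod_cast h3
  have f1 : ((cnt x y false false : ℝ))
      = cnt x z false false + cnt x z false true - cnt x y false true := by linarith
  have f2 : ((cnt x y true true : ℝ))
      = cnt x z true false + cnt x z true true - cnt x y true false := by linarith
  rw [f1, f2]
  constructor <;> intro h <;> nlinarith [h]

/-! ### A, B functions -/

noncomputable def bA (pq : ℝ × ℝ) : ℝ := Real.log (1 - pq.1) - Real.log pq.2
noncomputable def bB (pq : ℝ × ℝ) : ℝ := Real.log (1 - pq.2) - Real.log pq.1
noncomputable def bSS (pq : ℝ × ℝ) : ℝ := bA pq / bB pq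

/-! ### facts about points of bacT -/

lemma bacT_q_pos {pq : ℝ × ℝ} (h : pq ∈ bacT) : 0 < pq.2 := by
  obtain ⟨h1, h2, h3, h4⟩ := h
  rcases lt_or_eq_of_le (le_trans h1 h2) with h | h
  · exact h
  · exfalso; apply h4
    have e1 : pq.1 = 0 := by linarith
    have e2 : pq.2 = 0 := by linarith
    rw [Prod.ext_iff]
    exact ⟨by simpa using e1, by simpa using e2⟩

lemma bacT_facts {pq : ℝ × ℝ} (h : pq ∈ bacT) (hp : 0 < pq.1) :
    pq.1 < 1 ∧ 0 < pq.2 ∧ pq.2 < 1 ∧ 0 < bA pq ∧ 0 < bB pq ∧ bA pq ≤ bB pq := by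
  obtain ⟨h1, h2, h3, _⟩ := h
  have hq : 0 < pq.2 := lt_of_lt_of_le hp h2
  have hp1 : pq.1 < 1 := by linarith
  have hq1 : pq.2 < 1 := by linarith
  have hA : 0 < bA pq := by
    have : Real.log pq.2 < Real.log (1 - pq.1) := Real.log_lt_log hq (by linarith)
    unfold bA; linarith
  have hB : 0 < bB pq := by
    have : Real.log pq.1 < Real.log (1 - pq.2) := Real.log_lt_log hp (by linarith)
    unfold bB; linarith
  have hAB : bA pq ≤ bB pq := by
    have hx : (0:ℝ) < 1 - pq.1 := by linarith
    have hy : (0:ℝ) < 1 - pq.2 := by linarith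
    have key : pq.1 * (1 - pq.1) ≤ pq.2 * (1 - pq.2) := by nlinarith
    have l1 : Real.log (pq.1 * (1 - pq.1)) ≤ Real.log (pq.2 * (1 - pq.2)) :=
      Real.log_le_log (mul_pos hp hx) key
    rw [Real.log_mul (ne_of_gt hp) (ne_of_gt hx),
        Real.log_mul (ne_of_gt hq) (ne_of_gt hy)] at l1
    unfold bA bB; linarith
  exact ⟨hp1, hq, hq1, hA, hB, hAB⟩

lemma bA_lt_bB {pq : ℝ × ℝ} (h : pq ∈ bacT) (hp : 0 < pq.1) (hlt : pq.1 < pq.2) :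
    bA pq < bB pq := by
  obtain ⟨h1, h2, h3, _⟩ := h
  have hq : 0 < pq.2 := lt_of_lt_of_le hp h2
  have hx : (0:ℝ) < 1 - pq.1 := by linarith
  have hy : (0:ℝ) < 1 - pq.2 := by linarith
  have key : pq.1 * (1 - pq.1) < pq.2 * (1 - pq.2) := by nlinarith
  have l1 : Real.log (pq.1 * (1 - pq.1)) < Real.log (pq.2 * (1 - pq.2)) :=
    Real.log_lt_log (mul_pos hp hx) key
  rw [Real.log_mul (ne_of_gt hp) (ne_of_gt hx),
      Real.log_mul (ne_of_gt hq) (ne_of_gt hy)] at l1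
  unfold bA bB; linarith

/-! ### sign extension -/

lemma sign_ext {n : ℕ} {A B A' B' : ℝ} (hA : 0 < A) (hB : 0 < B) (hA' : 0 < A') (hB' : 0 < B')
    (H : ∀ a b : ℕ, 1 ≤ a → 1 ≤ b → a + b ≤ n →
      ((0 ≤ a*A - b*B ↔ 0 ≤ a*A' - b*B') ∧ (0 ≤ b*B - a*A ↔ 0 ≤ b*B' - a*A')))
    (a b : ℤ) (hab : a.natAbs + b.natAbs ≤ n) :
    (0 ≤ a*A + b*B ↔ 0 ≤ a*A' + b*B') := by
  rcases le_or_gt 0 a with ha | ha <;> rcases le_or_gt 0 b with hb | hb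
  · have ha' : (0:ℝ) ≤ a := by exact_mod_cast ha
    have hb' : (0:ℝ) ≤ b := by exact_mod_cast hb
    constructor <;> intro _ <;> nlinarith
  · -- a ≥ 0, b < 0
    rcases eq_or_lt_of_le ha with ha0 | ha0
    · have e : (a:ℝ) = 0 := by exact_mod_cast ha0.symm
      have hb' : (b:ℝ) < 0 := by exact_mod_cast hb
      rw [e]
      constructor <;> intro h <;> nlinarith
    · obtain ⟨H1, _⟩ := H a.toNat (-b).toNat (by omega) (by omega) (by omega)
      have e1 : ((a.toNat : ℕ) : ℝ) = (a : ℝ) := by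
        rw [show ((a.toNat : ℕ) : ℝ) = ((a.toNat : ℤ) : ℝ) by push_cast; ring,
          Int.toNat_of_nonneg ha]
      have e2 : (((-b).toNat : ℕ) : ℝ) = -(b : ℝ) := by
        rw [show (((-b).toNat : ℕ) : ℝ) = (((-b).toNat : ℤ) : ℝ) by push_cast; ring,
          Int.toNat_of_nonneg (by omega)]
        push_cast; ring
      rw [e1, e2] at H1
      constructor <;> intro h
      · have : 0 ≤ (a:ℝ) * A' - (-(b:ℝ)) * B' := H1.mp (by nlinarith)
        nlinarith
      · have : 0 ≤ (a:ℝ) * A - (-(b:ℝ)) * B := H1.mpr (by nlinarith)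
        nlinarith
  · -- a < 0, b ≥ 0
    rcases eq_or_lt_of_le hb with hb0 | hb0
    · have e : (b:ℝ) = 0 := by exact_mod_cast hb0.symm
      have ha' : (a:ℝ) < 0 := by exact_mod_cast ha
      rw [e]
      constructor <;> intro h <;> nlinarith
    · obtain ⟨_, H2⟩ := H (-a).toNat b.toNat (by omega) (by omega) (by omega)
      have e1 : (((-a).toNat : ℕ) : ℝ) = -(a : ℝ) := by
        rw [show (((-a).toNat : ℕ) : ℝ) = (((-a).toNat : ℤ) : ℝ) by push_cast; ring,
          Int.toNat_of_nonneg (by omega)]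
        push_cast; ring
      have e2 : ((b.toNat : ℕ) : ℝ) = (b : ℝ) := by
        rw [show ((b.toNat : ℕ) : ℝ) = ((b.toNat : ℤ) : ℝ) by push_cast; ring,
          Int.toNat_of_nonneg hb]
      rw [e1, e2] at H2
      constructor <;> intro h
      · have : 0 ≤ (b:ℝ) * B' - (-(a:ℝ)) * A' := H2.mp (by nlinarith)
        nlinarith
      · have : 0 ≤ (b:ℝ) * B - (-(a:ℝ)) * A := H2.mpr (by nlinarith)
        nlinarith
  · have ha' : (a:ℝ) < 0 := by exact_mod_cast ha
    have hb' : (b:ℝ) < 0 := by exact_mod_cast hb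
    constructor <;> intro h <;> nlinarith

/-! ### counting Fin filters -/

lemma card_fin_filter_Ico (n c d : ℕ) (hd : d ≤ n) :
    (Finset.univ.filter fun i : Fin n => c ≤ (i:ℕ) ∧ (i:ℕ) < d).card = d - c := by
  have h : (Finset.univ.filter fun i : Fin n => c ≤ (i:ℕ) ∧ (i:ℕ) < d).card
      = (Finset.Ico c d).card := by
    apply Finset.card_bij (fun (i : Fin n) (_ : i ∈ Finset.univ.filter fun i : Fin n => c ≤ (i:ℕ) ∧ (i:ℕ) < d) => (i:ℕ))
    · intro i hi
      simp only [Finset.mem_filter, Finset.mem_univ, true_and] at hi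
      simp only [Finset.mem_Ico]
      exact hi
    · intro i _ j _ hij
      exact Fin.val_injective hij
    · intro b hb
      simp only [Finset.mem_Ico] at hb
      refine ⟨⟨b, lt_of_lt_of_le hb.2 hd⟩, ?_, rfl⟩
      simp only [Finset.mem_filter, Finset.mem_univ, true_and]
      exact hb
  rw [h, Nat.card_Ico]

lemma cnt_congr {n : ℕ} (x y : Fin n → Bool) (a b : Bool) (c d : ℕ) (hd : d ≤ n)
    (h : ∀ i : Fin n, (x i = a ∧ y i = b) ↔ (c ≤ (i:ℕ) ∧ (i:ℕ) < d)) :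
    cnt x y a b = d - c := by
  unfold cnt
  rw [← card_fin_filter_Ico n c d hd]
  congr 1
  apply Finset.filter_congr
  intro i _
  exact h i

/-! ### explicit words -/

def wx (n a : ℕ) : Fin n → Bool := fun i => decide (a ≤ (i:ℕ))
def wy (n : ℕ) : Fin n → Bool := fun _ => true
def wz (n a b : ℕ) : Fin n → Bool := fun i => decide (a + b ≤ (i:ℕ))

lemma cnt_wxy_ft {n a b : ℕ} (hab : a + b ≤ n) : cnt (wx n a) (wy n) false true = a := by
  have := cnt_congr (wx n a) (wy n) false true 0 a (by omega)
    (fun i => by simp [wx, wy] <;> omega)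
  simpa using this

lemma cnt_wxy_tf {n a b : ℕ} (hab : a + b ≤ n) : cnt (wx n a) (wy n) true false = 0 := by
  have := cnt_congr (wx n a) (wy n) true false 0 0 (by omega)
    (fun i => by simp [wx, wy])
  simpa using this

lemma cnt_wxz_ft {n a b : ℕ} (hab : a + b ≤ n) : cnt (wx n a) (wz n a b) false true = 0 := by
  have := cnt_congr (wx n a) (wz n a b) false true 0 0 (by omega)
    (fun i => by simp [wx, wz] <;> omega)
  simpa using this

lemma cnt_wxz_tf {n a b : ℕ} (hab : a + b ≤ n) : cnt (wx n a) (wz n a b) true false = b := by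
  have := cnt_congr (wx n a) (wz n a b) true false a (a + b) (by omega)
    (fun i => by simp [wx, wz] <;> omega)
  simpa using this

/-! ### signature characterization of nEquiv -/

def sigMatch (n : ℕ) (pq pq' : ℝ × ℝ) : Prop :=
  ∀ a b : ℕ, 1 ≤ a → 1 ≤ b → a + b ≤ n →
    ((0 ≤ a * bA pq - b * bB pq ↔ 0 ≤ a * bA pq' - b * bB pq') ∧
     (0 ≤ b * bB pq - a * bA pq ↔ 0 ≤ b * bB pq' - a * bA pq'))

lemma bacPr_le_iff' {n : ℕ} {pq : ℝ × ℝ} (h : pq ∈ bacT) (hp : 0 < pq.1)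
    (x y z : Fin n → Bool) :
    (bacPr pq.1 pq.2 x y ≤ bacPr pq.1 pq.2 x z ↔
      0 ≤ (((cnt x y false true : ℤ) - cnt x z false true : ℤ) : ℝ) * bA pq
        + (((cnt x y true false : ℤ) - cnt x z true false : ℤ) : ℝ) * bB pq) := by
  obtain ⟨hp1, hq, hq1, _, _, _⟩ := bacT_facts h hp
  rw [bacPr_le_iff hp hp1 hq hq1 x y z]
  unfold bA bB
  push_cast
  constructor <;> intro hh <;> nlinarith [hh]

lemma nEquiv_iff_sigMatch {n : ℕ} {pq pq' : ℝ × ℝ} (h : pq ∈ bacT) (h' : pq' ∈ bacT)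
    (hp : 0 < pq.1) (hp' : 0 < pq'.1) (hn : 2 ≤ n) :
    nEquiv n pq.1 pq.2 pq'.1 pq'.2 ↔ sigMatch n pq pq' := by
  obtain ⟨hp1, hq, hq1, hA, hB, hAB⟩ := bacT_facts h hp
  obtain ⟨hp1', hq', hq1', hA', hB', hAB'⟩ := bacT_facts h' hp'
  constructor
  · intro hE a b ha hb hab
    have k1 := hE (wx n a) (wy n) (wz n a b)
    have k2 := hE (wx n a) (wz n a b) (wy n)
    rw [bacPr_le_iff' h hp, bacPr_le_iff' h' hp'] at k1 k2
    rw [cnt_wxy_ft hab, cnt_wxy_tf hab, cnt_wxz_ft hab, cnt_wxz_tf hab] at k1 k2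
    push_cast at k1 k2
    constructor
    · constructor <;> intro hh
      · have := k1.mp (by linarith); linarith
      · have := k1.mpr (by linarith); linarith
    · constructor <;> intro hh
      · have := k2.mp (by linarith); linarith
      · have := k2.mpr (by linarith); linarith
  · intro hS x y z
    rw [bacPr_le_iff' h hp x y z, bacPr_le_iff' h' hp' x y z]
    set a : ℤ := (cnt x y false true : ℤ) - cnt x z false true with hadef
    set b : ℤ := (cnt x y true false : ℤ) - cnt x z true false with hbdef
    apply sign_ext hA hB hA' hB' hS
    -- bound : a.natAbs + b.natAbs ≤ n
    have m1 : cnt x y false true ≤ (Finset.univ.filter fun i => x i = false).card := by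
      have := cnt_add_cnt_false x y; omega
    have m2 : cnt x z false true ≤ (Finset.univ.filter fun i => x i = false).card := by
      have := cnt_add_cnt_false x z; omega
    have m3 : cnt x y true false ≤ (Finset.univ.filter fun i => x i = true).card := by
      have := cnt_add_cnt_true x y; omega
    have m4 : cnt x z true false ≤ (Finset.univ.filter fun i => x i = true).card := by
      have := cnt_add_cnt_true x z; omega
    have msum : (Finset.univ.filter fun i => x i = false).card
        + (Finset.univ.filter fun i => x i = true).card = n := by
      have e : (Finset.univ.filter fun i : Fin n => ¬ (x i = false)) =
          (Finset.univ.filter fun i : Fin n => x i = true) := by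
        apply Finset.filter_congr; intro i _; simp
      have := Finset.card_filter_add_card_filter_not
        (s := (Finset.univ : Finset (Fin n))) (p := fun i => x i = false)
      rw [e] at this
      simpa using this
    omega

/-! ### the p = 0 case -/

lemma pow_le_pow_lt_one {q : ℝ} (hq : 0 < q) (hq1 : q < 1) (m k : ℕ) :
    q ^ m ≤ q ^ k ↔ k ≤ m := by
  rw [← not_lt (a := q ^ k), ← not_lt (a := m)]
  constructor
  · intro h hc; exact h ((pow_lt_pow_iff_right_of_lt_one₀ hq hq1).mpr hc)
  · intro h hc; exact h ((pow_lt_pow_iff_right_of_lt_one₀ hq hq1).mp hc)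

lemma bacPr_zero_le_iff {n : ℕ} {q : ℝ} (hq : 0 < q) (hq1 : q < 1) (x y z : Fin n → Bool) :
    (bacPr 0 q x y ≤ bacPr 0 q x z ↔
      (0 < cnt x y true false ∨
        (cnt x z true false = 0 ∧ cnt x z false true ≤ cnt x y false true))) := by
  have h1q : (0:ℝ) < 1 - q := by linarith
  rw [bacPr_formula, bacPr_formula]
  simp only [sub_zero, one_pow, one_mul]
  by_cases hy : cnt x y true false = 0
  · by_cases hz : cnt x z true false = 0
    · have e : cnt x y true true = cnt x z true true := by
        have a1 := cnt_add_cnt_true x y; have a2 := cnt_add_cnt_true x z; omega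
      rw [hy, hz, e, pow_zero, mul_one, mul_one]
      rw [mul_le_mul_iff_of_pos_right (by positivity)]
      rw [pow_le_pow_lt_one hq hq1]
      simp [hy, hz]
    · have hzpos : (0:ℝ) ^ cnt x z true false = 0 := zero_pow hz
      rw [hy, pow_zero, mul_one, hzpos, mul_zero, zero_mul]
      constructor
      · intro h
        exfalso
        have : (0:ℝ) < q ^ cnt x y false true * (1 - q) ^ cnt x y true true := by positivity
        linarith
      · intro h
        rcases h with h | h
        · omega
        · exact absurd h.1 hz
  · have hypos : (0:ℝ) ^ cnt x y true false = 0 := zero_pow hy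
    rw [hypos, mul_zero, zero_mul]
    constructor
    · intro _; left; omega
    · intro _
      have : (0:ℝ) ≤ q ^ cnt x z false true * (0:ℝ) ^ cnt x z true false
          * (1 - q) ^ cnt x z true true := by positivity
      linarith

lemma nEquiv_zero {n : ℕ} {pq pq' : ℝ × ℝ} (h : pq ∈ bacT) (h' : pq' ∈ bacT)
    (hp : pq.1 = 0) (hp' : pq'.1 = 0) : nEquiv n pq.1 pq.2 pq'.1 pq'.2 := by
  have hq : 0 < pq.2 := bacT_q_pos h
  have hq' : 0 < pq'.2 := bacT_q_pos h'
  obtain ⟨h1, h2, h3, _⟩ := h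
  obtain ⟨h1', h2', h3', _⟩ := h'
  have hq1 : pq.2 < 1 := by linarith
  have hq1' : pq'.2 < 1 := by linarith
  intro x y z
  rw [hp, hp']
  rw [bacPr_zero_le_iff hq hq1 x y z, bacPr_zero_le_iff hq' hq1' x y z]

lemma not_nEquiv_zero_pos {n : ℕ} {pq pq' : ℝ × ℝ} (h : pq ∈ bacT) (h' : pq' ∈ bacT)
    (hp : pq.1 = 0) (hp' : 0 < pq'.1) (hn : 2 ≤ n) :
    ¬ nEquiv n pq.1 pq.2 pq'.1 pq'.2 := by
  intro hE
  have hq : 0 < pq.2 := bacT_q_pos h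
  have hq1 : pq.2 < 1 := by obtain ⟨a,b,c,_⟩ := h; linarith
  obtain ⟨hp1', hq', hq1', _, _, _⟩ := bacT_facts h' hp'
  have key := hE (wy n) (wx n 1) (wx n 2)
  -- counts
  have c1 : cnt (wy n) (wx n 1) true false = 1 := by
    have := cnt_congr (wy n) (wx n 1) true false 0 1 (by omega)
      (fun i => by simp [wx, wy] <;> omega)
    simpa using this
  have c2 : cnt (wy n) (wx n 2) true false = 2 := by
    have := cnt_congr (wy n) (wx n 2) true false 0 2 (by omega)
      (fun i => by simp [wx, wy] <;> omega)
    simpa using this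
  have c3 : cnt (wy n) (wx n 1) false true = 0 := by
    have := cnt_congr (wy n) (wx n 1) false true 0 0 (by omega)
      (fun i => by simp [wx, wy] <;> omega)
    simpa using this
  have c4 : cnt (wy n) (wx n 2) false true = 0 := by
    have := cnt_congr (wy n) (wx n 2) false true 0 0 (by omega)
      (fun i => by simp [wx, wy] <;> omega)
    simpa using this
  -- left side of key is true
  rw [hp] at key
  rw [bacPr_zero_le_iff hq hq1, c1, c2, c3, c4] at key
  have ktrue : (0:ℕ) < 1 ∨ ((2:ℕ) = 0 ∧ (0:ℕ) ≤ 0) := by left; omega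
  have kright := key.mp ktrue
  -- right side is false
  rw [bacPr_formula, bacPr_formula] at kright
  have c1' : cnt (wy n) (wx n 1) true true = n - 1 := by
    have := cnt_congr (wy n) (wx n 1) true true 1 n (by omega)
      (fun i => by simp [wx, wy] <;> omega)
    simpa using this
  have c2' : cnt (wy n) (wx n 2) true true = n - 2 := by
    have := cnt_congr (wy n) (wx n 2) true true 2 n (by omega)
      (fun i => by simp [wx, wy] <;> omega)
    simpa using this
  have c5 : cnt (wy n) (wx n 1) false false = 0 := by
    have := cnt_congr (wy n) (wx n 1) false false 0 0 (by omega)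
      (fun i => by simp [wx, wy] <;> omega)
    simpa using this
  have c6 : cnt (wy n) (wx n 2) false false = 0 := by
    have := cnt_congr (wy n) (wx n 2) false false 0 0 (by omega)
      (fun i => by simp [wx, wy] <;> omega)
    simpa using this
  rw [c1, c2, c3, c4, c1', c2', c5, c6] at kright
  simp only [pow_zero, one_mul, mul_one, pow_one] at kright
  -- kright : p' * (1-q')^(n-1) ≤ p'^2 * (1-q')^(n-2)
  have en : n - 1 = (n - 2) + 1 := by omega
  rw [en, pow_succ] at kright
  have h1q' : (0:ℝ) < 1 - pq'.2 := by linarith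
  have hpow : (0:ℝ) < (1 - pq'.2) ^ (n-2) := by positivity
  have key2 : pq'.1 * (1 - pq'.2) ≤ pq'.1 * pq'.1 :=
    le_of_mul_le_mul_right (by nlinarith [kright]) hpow
  have key3 : 1 - pq'.2 ≤ pq'.1 := le_of_mul_le_mul_left (by linarith [key2]) hp'
  obtain ⟨_, _, h3', _⟩ := h'
  linarith

/-! ### the fraction set -/

def fracs (n : ℕ) : Finset ℚ := (fpairs n).image fun ab => (ab.2 : ℚ) / ab.1

lemma one_mem_fracs {n : ℕ} (hn : 2 ≤ n) : (1:ℚ) ∈ fracs n := by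
  unfold fracs
  rw [Finset.mem_image]
  refine ⟨(1,1), ?_, by norm_num⟩
  rw [mem_fpairs]
  refine ⟨le_refl _, le_refl _, by omega, le_refl _, by norm_num⟩

lemma fracs_pos {n : ℕ} {f : ℚ} (hf : f ∈ fracs n) : 0 < f ∧ f ≤ 1 := by
  unfold fracs at hf
  rw [Finset.mem_image] at hf
  obtain ⟨ab, hab, rfl⟩ := hf
  rw [mem_fpairs] at hab
  obtain ⟨h1, h2, _, h4, _⟩ := hab
  have ha : (0:ℚ) < ab.1 := by exact_mod_cast h1
  have hb : (0:ℚ) < ab.2 := by exact_mod_cast h2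
  constructor
  · positivity
  · rw [div_le_one ha]
    exact_mod_cast h4

lemma card_fracs {n : ℕ} : (fracs n).card = (fpairs n).card := by
  unfold fracs
  apply Finset.card_image_of_injOn
  intro ab hab cd hcd h
  rw [Finset.mem_coe, mem_fpairs] at hab
  rw [Finset.mem_coe, mem_fpairs] at hcd
  obtain ⟨a1, b1, _, ba1, g1⟩ := hab
  obtain ⟨a2, b2, _, ba2, g2⟩ := hcd
  have ha1 : (0:ℚ) < ab.1 := by exact_mod_cast a1
  have ha2 : (0:ℚ) < cd.1 := by exact_mod_cast a2
  rw [div_eq_div_iff (by positivity) (by positivity)] at h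
  have hnat : ab.2 * cd.1 = cd.2 * ab.1 := by exact_mod_cast h
  have d1 : ab.1 ∣ cd.1 := by
    have hdvd : ab.1 ∣ cd.2 * ab.1 := Dvd.intro_left _ rfl
    rw [← hnat] at hdvd
    have hcop : (Nat.gcd ab.1 ab.2) = 1 := g1
    exact (Nat.Coprime.dvd_of_dvd_mul_left hcop hdvd)
  have d2 : cd.1 ∣ ab.1 := by
    have hdvd : cd.1 ∣ ab.2 * cd.1 := Dvd.intro_left _ rfl
    rw [hnat] at hdvd
    have hcop : (Nat.gcd cd.1 cd.2) = 1 := g2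
    exact (Nat.Coprime.dvd_of_dvd_mul_left hcop hdvd)
  have e1 : ab.1 = cd.1 := Nat.dvd_antisymm d1 d2
  have e2 : ab.2 = cd.2 := by
    rw [e1] at hnat
    exact Nat.eq_of_mul_eq_mul_right a2 hnat
  exact Prod.ext e1 e2

lemma quot_mem_fracs {n a b : ℕ} (ha : 1 ≤ a) (hb : 1 ≤ b) (hba : b ≤ a) (hab : a + b ≤ n) :
    ((b:ℚ) / a) ∈ fracs n := by
  set g := Nat.gcd a b with hg
  have hg0 : 0 < g := Nat.gcd_pos_of_pos_left _ (by omega)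
  have hga : g ∣ a := Nat.gcd_dvd_left a b
  have hgb : g ∣ b := Nat.gcd_dvd_right a b
  unfold fracs
  rw [Finset.mem_image]
  refine ⟨(a / g, b / g), ?_, ?_⟩
  · rw [mem_fpairs]
    refine ⟨Nat.one_le_div_iff hg0 |>.mpr (Nat.le_of_dvd (by omega) hga),
      Nat.one_le_div_iff hg0 |>.mpr (Nat.le_of_dvd (by omega) hgb), ?_,
      Nat.div_le_div_right hba, Nat.coprime_div_gcd_div_gcd hg0⟩
    calc a / g + b / g ≤ a + b := by
          have := Nat.div_le_self a g
          have := Nat.div_le_self b g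
          omega
      _ ≤ n := hab
  · have hgq : ((g:ℚ)) ≠ 0 := by exact_mod_cast Nat.pos_iff_ne_zero.mp hg0
    have e1 : ((b / g : ℕ) : ℚ) = (b:ℚ) / g := by
      rw [Nat.cast_div hgb hgq]
    have e2 : ((a / g : ℕ) : ℚ) = (a:ℚ) / g := by
      rw [Nat.cast_div hga hgq]
    rw [e1, e2]
    have haq : ((a:ℚ)) ≠ 0 := by positivity
    field_simp

/-! ### the code of a point -/

open Classical in
noncomputable def leastGE (n : ℕ) (S : ℝ) : ℚ :=
  if h : ((fracs n).filter (fun g : ℚ => S ≤ (g:ℝ))).Nonempty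
  then ((fracs n).filter (fun g : ℚ => S ≤ (g:ℝ))).min' h else 1

open Classical in
noncomputable def code (n : ℕ) (pq : ℝ × ℝ) : Option (ℚ × Bool) :=
  if pq.1 = 0 then none
  else some (leastGE n (bSS pq),
    if bSS pq = ((leastGE n (bSS pq) : ℚ) : ℝ) then true else false)

lemma leastGE_spec {n : ℕ} {S : ℝ} (hn : 2 ≤ n) (hS : S ≤ 1) :
    leastGE n S ∈ fracs n ∧ S ≤ (leastGE n S : ℝ) ∧
      (∀ g ∈ fracs n, S ≤ (g:ℝ) → leastGE n S ≤ g) := by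
  classical
  have hne : ((fracs n).filter (fun g : ℚ => S ≤ (g:ℝ))).Nonempty := by
    refine ⟨1, ?_⟩
    rw [Finset.mem_filter]
    exact ⟨one_mem_fracs hn, by exact_mod_cast hS⟩
  unfold leastGE
  rw [dif_pos hne]
  have hmem := Finset.min'_mem _ hne
  rw [Finset.mem_filter] at hmem
  refine ⟨hmem.1, hmem.2, ?_⟩
  intro g hg hSg
  apply Finset.min'_le
  rw [Finset.mem_filter]
  exact ⟨hg, hSg⟩

lemma leastGE_lt {n : ℕ} {S : ℝ} (hn : 2 ≤ n) (hS : S ≤ 1) {g : ℚ}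
    (hg : g ∈ fracs n) (hlt : g < leastGE n S) : (g:ℝ) < S := by
  by_contra hcon
  push_neg at hcon
  have := (leastGE_spec hn hS).2.2 g hg hcon
  exact absurd hlt (not_lt.mpr this)

/-! ### bSS facts -/

lemma bSS_mem {pq : ℝ × ℝ} (h : pq ∈ bacT) (hp : 0 < pq.1) :
    0 < bSS pq ∧ bSS pq ≤ 1 := by
  obtain ⟨_, _, _, hA, hB, hAB⟩ := bacT_facts h hp
  unfold bSS
  constructor
  · positivity
  · rw [div_le_one hB]; exact hAB

lemma frac_le_bSS_iff {pq : ℝ × ℝ} (h : pq ∈ bacT) (hp : 0 < pq.1) {a b : ℕ}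
    (ha : 1 ≤ a) :
    (((b:ℝ) / a) ≤ bSS pq ↔ 0 ≤ (a:ℝ) * bA pq - b * bB pq) := by
  obtain ⟨_, _, _, hA, hB, hAB⟩ := bacT_facts h hp
  have ha' : (0:ℝ) < a := by exact_mod_cast ha
  unfold bSS
  rw [div_le_div_iff₀ ha' hB]
  constructor <;> intro hh <;> nlinarith

lemma bSS_le_frac_iff {pq : ℝ × ℝ} (h : pq ∈ bacT) (hp : 0 < pq.1) {a b : ℕ}
    (ha : 1 ≤ a) :
    (bSS pq ≤ ((b:ℝ) / a) ↔ 0 ≤ (b:ℝ) * bB pq - a * bA pq) := by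
  obtain ⟨_, _, _, hA, hB, hAB⟩ := bacT_facts h hp
  have ha' : (0:ℝ) < a := by exact_mod_cast ha
  unfold bSS
  rw [div_le_div_iff₀ hB ha']
  constructor <;> intro hh <;> nlinarith

/-! ### code determines ordering relative to all fractions -/

lemma code_cell {n : ℕ} {pq : ℝ × ℝ} (h : pq ∈ bacT) (hp : 0 < pq.1) (hn : 2 ≤ n)
    {g : ℚ} (hg : g ∈ fracs n) :
    (bSS pq ≤ (g:ℝ) ↔ leastGE n (bSS pq) ≤ g) ∧
    ((g:ℝ) ≤ bSS pq ↔ (g < leastGE n (bSS pq) ∨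
      (g = leastGE n (bSS pq) ∧ bSS pq = ((leastGE n (bSS pq) : ℚ) : ℝ)))) := by
  obtain ⟨hS0, hS1⟩ := bSS_mem h hp
  obtain ⟨fmem, hSf, hmin⟩ := leastGE_spec (n := n) hn hS1
  constructor
  · constructor
    · intro hh; exact_mod_cast hmin g hg hh
    · intro hh
      calc bSS pq ≤ ((leastGE n (bSS pq) : ℚ) : ℝ) := hSf
        _ ≤ (g:ℝ) := by exact_mod_cast hh
  · constructor
    · intro hh
      rcases lt_trichotomy g (leastGE n (bSS pq)) with hc | hc | hc
      · left; exact hc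
      · right
        refine ⟨hc, le_antisymm hSf ?_⟩
        have hce : ((leastGE n (bSS pq) : ℚ) : ℝ) = (g:ℝ) := by exact_mod_cast hc.symm
        rw [hce]; exact hh
      · exfalso
        have hcast : ((leastGE n (bSS pq) : ℚ) : ℝ) < (g:ℝ) := by exact_mod_cast hc
        linarith
    · rintro (hc | ⟨hc, hc2⟩)
      · exact le_of_lt (leastGE_lt hn hS1 hg hc)
      · rw [hc]; exact le_of_eq hc2.symm

lemma nEquiv_symm {n : ℕ} {p q p' q' : ℝ} (h : nEquiv n p q p' q') :
    nEquiv n p' q' p q := fun x y z => (h x y z).symm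

lemma nEquiv_refl (n : ℕ) (p q : ℝ) : nEquiv n p q p q := fun _ _ _ => Iff.rfl

lemma nEquiv_trans {n : ℕ} {p q p' q' p'' q'' : ℝ} (h : nEquiv n p q p' q')
    (h' : nEquiv n p' q' p'' q'') : nEquiv n p q p'' q'' :=
  fun x y z => (h x y z).trans (h' x y z)

lemma sigMatch_iff_code {n : ℕ} {pq pq' : ℝ × ℝ} (h : pq ∈ bacT) (h' : pq' ∈ bacT)
    (hp : 0 < pq.1) (hp' : 0 < pq'.1) (hn : 2 ≤ n) :
    (sigMatch n pq pq' ↔ code n pq = code n pq') := by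
  classical
  obtain ⟨hS0, hS1⟩ := bSS_mem h hp
  obtain ⟨hS0', hS1'⟩ := bSS_mem h' hp'
  obtain ⟨_, _, _, hA, hB, hAB⟩ := bacT_facts h hp
  obtain ⟨_, _, _, hA', hB', hAB'⟩ := bacT_facts h' hp'
  constructor
  · intro hsig
    have key : ∀ g ∈ fracs n, ((g:ℝ) ≤ bSS pq ↔ (g:ℝ) ≤ bSS pq')
        ∧ (bSS pq ≤ (g:ℝ) ↔ bSS pq' ≤ (g:ℝ)) := by
      intro g hg
      obtain ⟨ab, habm, rfl⟩ := Finset.mem_image.mp hg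
      rw [mem_fpairs] at habm
      obtain ⟨h1, h2, h3, h4, h5⟩ := habm
      have hcast : (((ab.2 : ℚ) / (ab.1 : ℚ) : ℚ) : ℝ) = ((ab.2:ℕ) : ℝ) / ((ab.1:ℕ) : ℝ) := by
        push_cast; ring
      rw [hcast]
      obtain ⟨k1, k2⟩ := hsig ab.1 ab.2 h1 h2 h3
      constructor
      · rw [frac_le_bSS_iff h hp h1, frac_le_bSS_iff h' hp' h1]; exact k1
      · rw [bSS_le_frac_iff h hp h1, bSS_le_frac_iff h' hp' h1]; exact k2
    have efilt : ((fracs n).filter (fun g : ℚ => bSS pq ≤ (g:ℝ)))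
        = ((fracs n).filter (fun g : ℚ => bSS pq' ≤ (g:ℝ))) := by
      apply Finset.filter_congr
      intro g hg
      exact (key g hg).2
    have ef : leastGE n (bSS pq) = leastGE n (bSS pq') := by
      unfold leastGE
      rw [efilt]
    have fmem := (leastGE_spec (n := n) hn hS1).1
    have ebool : (bSS pq = ((leastGE n (bSS pq) : ℚ) : ℝ))
        ↔ (bSS pq' = ((leastGE n (bSS pq') : ℚ) : ℝ)) := by
      rw [← ef]
      have hSf := (leastGE_spec (n := n) hn hS1).2.1
      have hSf' : bSS pq' ≤ ((leastGE n (bSS pq) : ℚ) : ℝ) := by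
        rw [ef]; exact (leastGE_spec (n := n) hn hS1').2.1
      have hiff := (key _ fmem).1
      constructor
      · intro hh
        exact le_antisymm hSf' (hiff.mp (le_of_eq hh.symm))
      · intro hh
        exact le_antisymm hSf (hiff.mpr (le_of_eq hh.symm))
    unfold code
    rw [if_neg (ne_of_gt hp), if_neg (ne_of_gt hp')]
    congr 1
    refine Prod.ext ef ?_
    by_cases hc : bSS pq = ((leastGE n (bSS pq) : ℚ) : ℝ)
    · rw [if_pos hc, if_pos (by rw [← ebool]; exact hc)]
    · rw [if_neg hc, if_neg (by rw [← ebool]; exact hc)]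
  · intro hcode
    unfold code at hcode
    rw [if_neg (ne_of_gt hp), if_neg (ne_of_gt hp')] at hcode
    have hcode' := Option.some_injective _ hcode
    have ef : leastGE n (bSS pq) = leastGE n (bSS pq') := congrArg Prod.fst hcode'
    have ebool : (bSS pq = ((leastGE n (bSS pq) : ℚ) : ℝ))
        ↔ (bSS pq' = ((leastGE n (bSS pq') : ℚ) : ℝ)) := by
      have hsnd := congrArg Prod.snd hcode'
      simp only at hsnd
      constructor
      · intro hhc
        by_contra hc'
        rw [if_pos hhc, if_neg hc'] at hsnd
        exact absurd hsnd (by decide)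
      · intro hhc
        by_contra hc
        rw [if_neg hc, if_pos hhc] at hsnd
        exact absurd hsnd (by decide)
    intro a b ha hb hab
    rcases le_or_gt b a with hba | hba
    · set g : ℚ := (b:ℚ) / (a:ℚ) with hgdef
      have hg : g ∈ fracs n := quot_mem_fracs ha hb hba hab
      have hcast : ((g : ℚ) : ℝ) = ((b:ℕ) : ℝ) / ((a:ℕ) : ℝ) := by
        rw [hgdef]; push_cast; ring
      have c1 := code_cell h hp hn hg
      have c2 := code_cell h' hp' hn hg
      rw [hcast] at c1 c2
      constructor
      · rw [← frac_le_bSS_iff h hp ha, ← frac_le_bSS_iff h' hp' ha]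
        have ebool2 : (bSS pq = ((leastGE n (bSS pq') : ℚ) : ℝ))
            ↔ (bSS pq' = ((leastGE n (bSS pq') : ℚ) : ℝ)) := by
          conv_lhs => rw [← ef]
          exact ebool
        rw [c1.2, c2.2, ef, ebool2]
      · rw [← bSS_le_frac_iff h hp ha, ← bSS_le_frac_iff h' hp' ha]
        rw [c1.1, c2.1, ef]
    · have hcast : ((a:ℕ) : ℝ) < ((b:ℕ) : ℝ) := by exact_mod_cast hba
      constructor
      · apply iff_of_false <;>
          · intro hh
            nlinarith
      · apply iff_of_true <;> nlinarith

lemma nEquiv_iff_code {n : ℕ} {pq pq' : ℝ × ℝ} (h : pq ∈ bacT) (h' : pq' ∈ bacT)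
    (hn : 2 ≤ n) :
    nEquiv n pq.1 pq.2 pq'.1 pq'.2 ↔ code n pq = code n pq' := by
  rcases eq_or_lt_of_le h.1 with hp | hp <;> rcases eq_or_lt_of_le h'.1 with hp' | hp'
  · rw [iff_true_left (nEquiv_zero h h' hp.symm hp'.symm)]
    unfold code
    rw [if_pos hp.symm, if_pos hp'.symm]
  · apply iff_of_false
    · exact not_nEquiv_zero_pos h h' hp.symm hp' hn
    · unfold code
      rw [if_pos hp.symm, if_neg (ne_of_gt hp')]
      simp
  · apply iff_of_false
    · intro hE
      exact not_nEquiv_zero_pos h' h hp'.symm hp hn (nEquiv_symm hE)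
    · unfold code
      rw [if_pos hp'.symm, if_neg (ne_of_gt hp)]
      simp
  · rw [nEquiv_iff_sigMatch h h' hp hp' hn]
    exact sigMatch_iff_code h h' hp hp' hn

/-! ### perturbation: moving away from the diagonal strictly decreases bSS -/

lemma bSS_perturb {p q δ : ℝ} (hδ : 0 < δ) (hpδ : δ < p) (hq : p ≤ q) (hsum : p + q < 1) :
    bSS (p - δ, q + δ) < bSS (p, q) := by
  have hp : 0 < p := lt_trans hδ hpδ
  have hmem : (p, q) ∈ bacT := by
    refine ⟨le_of_lt hp, hq, hsum, ?_⟩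
    intro hc
    have : p = 0 := congrArg Prod.fst hc
    linarith
  have hmem' : (p - δ, q + δ) ∈ bacT := by
    refine ⟨by simp; linarith, by simp; linarith, by simp; linarith, ?_⟩
    intro hc
    have : p - δ = 0 := congrArg Prod.fst hc
    linarith
  obtain ⟨hp1, hq0, hq1, hA, hB, hAB⟩ := bacT_facts hmem (by simpa using hp)
  obtain ⟨hp1', hq0', hq1', hA', hB', hAB'⟩ := bacT_facts hmem' (by simp; linarith)
  simp only at hq0 hq1 hp1 hq0' hq1' hp1'
  -- A' < A
  have hAlt : bA (p - δ, q + δ) < bA (p, q) := by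
    unfold bA
    simp only
    have k1 : Real.log ((1 - (p - δ)) * q) < Real.log ((1 - p) * (q + δ)) := by
      apply Real.log_lt_log
      · have : (0:ℝ) < 1 - (p - δ) := by linarith
        positivity
      · nlinarith
    rw [Real.log_mul (by linarith) (by linarith), Real.log_mul (by linarith) (by linarith)] at k1
    linarith
  -- B < B'
  have hBlt : bB (p, q) < bB (p - δ, q + δ) := by
    unfold bB
    simp only
    have k1 : Real.log ((1 - q) * (p - δ)) < Real.log ((1 - (q + δ)) * p) := by
      apply Real.log_lt_log
      · have h1 : (0:ℝ) < 1 - q := by linarith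
        have h2 : (0:ℝ) < p - δ := by linarith
        positivity
      · nlinarith
    rw [Real.log_mul (by linarith) (by linarith), Real.log_mul (by linarith) (by linarith)] at k1
    linarith
  unfold bSS
  rw [div_lt_div_iff₀ hB' hB]
  nlinarith

/-! ### realization of every value of bSS in (0,1] -/

noncomputable def gpath (s : ℝ) : ℝ := bSS (s, 1/2 - s)

lemma gpath_cont {s₀ : ℝ} (hs₀ : 0 < s₀) :
    ContinuousOn gpath (Set.Icc s₀ (1/4)) := by
  have h1 : ContinuousOn (fun s : ℝ => Real.log (1 - s) - Real.log (1/2 - s))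
      (Set.Icc s₀ (1/4)) := by
    apply ContinuousOn.sub
    · apply ContinuousOn.log
      · exact (continuous_const.sub continuous_id).continuousOn
      · intro x hx
        obtain ⟨hx1, hx2⟩ := hx
        have : x ≤ 1/4 := hx2
        intro hc; rw [sub_eq_zero] at hc; linarith
    · apply ContinuousOn.log
      · exact (continuous_const.sub continuous_id).continuousOn
      · intro x hx
        obtain ⟨hx1, hx2⟩ := hx
        intro hc; rw [sub_eq_zero] at hc; linarith
  have h2 : ContinuousOn (fun s : ℝ => Real.log (1 - (1/2 - s)) - Real.log s)
      (Set.Icc s₀ (1/4)) := by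
    apply ContinuousOn.sub
    · apply ContinuousOn.log
      · exact (continuous_const.sub (continuous_const.sub continuous_id)).continuousOn
      · intro x hx
        obtain ⟨hx1, hx2⟩ := hx
        intro hc; rw [sub_eq_zero] at hc; have : (1:ℝ) = 1/2 - x := hc; linarith
    · apply ContinuousOn.log
      · exact continuous_id.continuousOn
      · intro x hx
        obtain ⟨hx1, hx2⟩ := hx
        intro hc; linarith [hc]
  have hne : ∀ x ∈ Set.Icc s₀ (1/4), Real.log (1 - (1/2 - x)) - Real.log x ≠ 0 := by
    intro x hx
    obtain ⟨hx1, hx2⟩ := hx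
    have hx0 : 0 < x := lt_of_lt_of_le hs₀ hx1
    have : Real.log x < Real.log (1 - (1/2 - x)) := Real.log_lt_log hx0 (by linarith)
    intro hc; linarith [hc]
  exact ContinuousOn.congr (h1.div h2 hne) (fun x hx => rfl)

lemma gpath_quarter : gpath (1/4) = 1 := by
  unfold gpath bSS bA bB
  simp only
  norm_num
  have : Real.log (1/4) < Real.log (3/4) := Real.log_lt_log (by norm_num) (by norm_num)
  intro hc; linarith

lemma exists_bSS {v : ℝ} (hv0 : 0 < v) (hv1 : v ≤ 1) :
    ∃ pq ∈ bacT, 0 < pq.1 ∧ bSS pq = v := by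
  set e₀ := Real.log (1/2) - Real.log 4 / v - 1 with he₀
  set s₀ := Real.exp e₀ with hs₀def
  have hs₀ : 0 < s₀ := Real.exp_pos _
  have hlog2 : 0 < Real.log 2 := Real.log_pos (by norm_num)
  have hlog4 : 0 < Real.log 4 := Real.log_pos (by norm_num)
  have hl2 : Real.log (1/2) = - Real.log 2 := by rw [one_div, Real.log_inv]
  have hl4 : Real.log (1/4) = - Real.log 4 := by rw [one_div, Real.log_inv]
  have h44 : Real.log 4 ≤ Real.log 4 / v := by
    rw [le_div_iff₀ hv0]; nlinarith
  have hs₀lt : s₀ < 1/4 := by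
    rw [hs₀def, show (1/4 : ℝ) = Real.exp (Real.log (1/4)) from (Real.exp_log (by norm_num)).symm]
    apply Real.exp_lt_exp.mpr
    rw [he₀, hl2, hl4]
    linarith
  have hgs₀ : gpath s₀ < v := by
    unfold gpath bSS bA bB
    simp only
    have hnum : Real.log (1 - s₀) - Real.log (1/2 - s₀) ≤ Real.log 4 := by
      have k1 : Real.log (1 - s₀) ≤ 0 := Real.log_nonpos (by linarith) (by linarith)
      have k2 : Real.log (1/4) ≤ Real.log (1/2 - s₀) :=
        Real.log_le_log (by norm_num) (by linarith)
      rw [hl4] at k2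
      linarith
    rw [show (1:ℝ) - (1/2 - s₀) = 1/2 + s₀ from by ring]
    have hden : Real.log 4 / v + 1 ≤ Real.log (1/2 + s₀) - Real.log s₀ := by
      have k1 : Real.log (1/2) ≤ Real.log (1/2 + s₀) :=
        Real.log_le_log (by norm_num) (by linarith)
      have k2 : Real.log s₀ = e₀ := by rw [hs₀def, Real.log_exp]
      rw [k2, he₀]
      linarith
    have hdenpos : 0 < Real.log (1/2 + s₀) - Real.log s₀ := by
      have : 0 < Real.log 4 / v := by positivity
      linarith
    rw [div_lt_iff₀ hdenpos]
    have hfe : v * (Real.log 4 / v) = Real.log 4 := by field_simp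
    nlinarith
  have hmem : v ∈ Set.Icc (gpath s₀) (gpath (1/4)) := by
    rw [gpath_quarter]
    exact ⟨le_of_lt hgs₀, hv1⟩
  have := intermediate_value_Icc (le_of_lt hs₀lt) (gpath_cont hs₀)
  obtain ⟨s, hsmem, hsval⟩ := this hmem
  obtain ⟨hs1, hs2⟩ := hsmem
  refine ⟨(s, 1/2 - s), ?_, ?_, hsval⟩
  · refine ⟨by simp; linarith, by simp; linarith, by simp; linarith, ?_⟩
    intro hc
    have : s = 0 := congrArg Prod.fst hc
    linarith
  · simp only; linarith

/-! ### topology helpers -/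

def oset : Set (ℝ × ℝ) := {pq | 0 < pq.1 ∧ 0 < pq.2 ∧ pq.1 + pq.2 < 1}

lemma oset_open : IsOpen oset := by
  have h1 : IsOpen {pq : ℝ × ℝ | 0 < pq.1} := isOpen_lt continuous_const continuous_fst
  have h2 : IsOpen {pq : ℝ × ℝ | 0 < pq.2} := isOpen_lt continuous_const continuous_snd
  have h3 : IsOpen {pq : ℝ × ℝ | pq.1 + pq.2 < 1} :=
    isOpen_lt (continuous_fst.add continuous_snd) continuous_const
  have he : oset = ({pq : ℝ × ℝ | 0 < pq.1} ∩ {pq : ℝ × ℝ | 0 < pq.2})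
      ∩ {pq : ℝ × ℝ | pq.1 + pq.2 < 1} := by
    ext pq
    simp only [oset, Set.mem_inter_iff, Set.mem_setOf_eq]
    tauto
  rw [he]
  exact (h1.inter h2).inter h3

lemma bSS_contOn : ContinuousOn bSS oset := by
  have hA : ContinuousOn (fun pq : ℝ × ℝ => Real.log (1 - pq.1) - Real.log pq.2) oset := by
    apply ContinuousOn.sub
    · apply ContinuousOn.log
      · exact (continuous_const.sub continuous_fst).continuousOn
      · rintro ⟨p, q⟩ ⟨h1, h2, h3⟩
        simp only at h1 h2 h3 ⊢
        intro hc; rw [sub_eq_zero] at hc; linarith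
    · apply ContinuousOn.log
      · exact continuous_snd.continuousOn
      · rintro ⟨p, q⟩ ⟨h1, h2, h3⟩
        simp only at h1 h2 h3 ⊢
        intro hc; linarith [hc]
  have hB : ContinuousOn (fun pq : ℝ × ℝ => Real.log (1 - pq.2) - Real.log pq.1) oset := by
    apply ContinuousOn.sub
    · apply ContinuousOn.log
      · exact (continuous_const.sub continuous_snd).continuousOn
      · rintro ⟨p, q⟩ ⟨h1, h2, h3⟩
        simp only at h1 h2 h3 ⊢
        intro hc; rw [sub_eq_zero] at hc; linarith
    · apply ContinuousOn.log
      · exact continuous_fst.continuousOn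
      · rintro ⟨p, q⟩ ⟨h1, h2, h3⟩
        simp only at h1 h2 h3 ⊢
        intro hc; linarith [hc]
  have hne : ∀ pq ∈ oset, Real.log (1 - pq.2) - Real.log pq.1 ≠ 0 := by
    rintro ⟨p, q⟩ ⟨h1, h2, h3⟩
    simp only at h1 h2 h3 ⊢
    have : Real.log p < Real.log (1 - q) := Real.log_lt_log h1 (by linarith)
    intro hc; linarith [hc]
  exact ContinuousOn.congr (hA.div hB hne) (fun x hx => rfl)

/-! ### the largest fraction below f -/

open Classical in
noncomputable def lowf (n : ℕ) (f : ℚ) : ℚ :=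
  if h : ((fracs n).filter (fun g => g < f)).Nonempty
  then ((fracs n).filter (fun g => g < f)).max' h else 0

lemma lowf_spec {n : ℕ} {f : ℚ} (hf : f ∈ fracs n) :
    0 ≤ lowf n f ∧ lowf n f < f ∧ (∀ g ∈ fracs n, g < f → g ≤ lowf n f) ∧
      (lowf n f = 0 ∨ lowf n f ∈ fracs n) := by
  classical
  have hf0 := (fracs_pos hf).1
  unfold lowf
  by_cases h : ((fracs n).filter (fun g => g < f)).Nonempty
  · rw [dif_pos h]
    have hmem := Finset.max'_mem _ h
    rw [Finset.mem_filter] at hmem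
    refine ⟨le_of_lt (fracs_pos hmem.1).1, hmem.2, ?_, Or.inr hmem.1⟩
    intro g hg hgf
    apply Finset.le_max'
    rw [Finset.mem_filter]
    exact ⟨hg, hgf⟩
  · rw [dif_neg h]
    refine ⟨le_refl _, hf0, ?_, Or.inl rfl⟩
    intro g hg hgf
    exfalso
    exact h ⟨g, Finset.mem_filter.mpr ⟨hg, hgf⟩⟩

/-! ### code value extraction -/

lemma code_none_iff {n : ℕ} (r : ℝ × ℝ) : code n r = none ↔ r.1 = 0 := by
  unfold code
  by_cases hc : r.1 = 0
  · rw [if_pos hc]; simp [hc]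
  · rw [if_neg hc]; simp [hc]

lemma code_some {n : ℕ} {r : ℝ × ℝ} {f : ℚ} {bl : Bool} (h : code n r = some (f, bl)) :
    r.1 ≠ 0 ∧ f = leastGE n (bSS r) ∧ (bl = true ↔ bSS r = ((f : ℚ) : ℝ)) := by
  classical
  unfold code at h
  by_cases hc : r.1 = 0
  · rw [if_pos hc] at h; exact absurd h (by simp)
  · rw [if_neg hc] at h
    have h' := Option.some_injective _ h
    have e1 : leastGE n (bSS r) = f := congrArg Prod.fst h'
    have e2 := congrArg Prod.snd h'
    simp only at e2
    refine ⟨hc, e1.symm, ?_⟩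
    constructor
    · intro hbl
      rw [hbl] at e2
      by_contra hne
      rw [← e1] at hne
      rw [if_neg hne] at e2
      exact absurd e2.symm (by decide)
    · intro hS
      rw [← e1] at hS
      rw [if_pos hS] at e2
      exact e2.symm

lemma code_pos {n : ℕ} {r : ℝ × ℝ} (h : r ∈ bacT) (hne : code n r ≠ none) : 0 < r.1 := by
  rcases eq_or_lt_of_le h.1 with hp | hp
  · exact absurd ((code_none_iff r).mpr hp.symm) hne
  · exact hp

/-! ### perturbation -/

lemma pert {n : ℕ} {r : ℝ × ℝ} (h : r ∈ bacT) (hn : 2 ≤ n)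
    (hv : code n r = none ∨ ∃ f : ℚ, code n r = some (f, true)) :
    ∀ ε > 0, ∃ r' ∈ bacT, dist r' r < ε ∧ code n r' ≠ code n r := by
  intro ε hε
  obtain ⟨h1, h2, h3, h4⟩ := h
  have hq : 0 < r.2 := bacT_q_pos ⟨h1, h2, h3, h4⟩
  rcases hv with hv | ⟨f, hv⟩
  · -- r.1 = 0 ; perturb to positive p
    have hp0 : r.1 = 0 := (code_none_iff r).mp hv
    set δ := min (ε/2) (min (r.2/2) ((1 - r.2)/2)) with hδdef
    have hδ : 0 < δ := by
      apply lt_min (by linarith) (lt_min (by linarith) (by linarith))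
    have hδ1 : δ ≤ ε/2 := min_le_left _ _
    have hδ2 : δ ≤ r.2/2 := le_trans (min_le_right _ _) (min_le_left _ _)
    have hδ3 : δ ≤ (1 - r.2)/2 := le_trans (min_le_right _ _) (min_le_right _ _)
    refine ⟨(δ, r.2), ⟨by simp; linarith, by simp; linarith, by simp; linarith, ?_⟩, ?_, ?_⟩
    · intro hc
      have : δ = 0 := congrArg Prod.fst hc
      linarith
    · rw [Prod.dist_eq]
      simp only
      rw [hp0]
      rw [Real.dist_eq, Real.dist_eq]
      simp only [sub_self, abs_zero, sub_zero]
      rw [abs_of_pos hδ]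
      apply max_lt <;> linarith
    · rw [hv]
      intro hc
      rw [code_none_iff] at hc
      simp only at hc
      linarith
  · -- bSS r = f ; perturb along (-δ, δ)
    have hp : 0 < r.1 := code_pos ⟨h1, h2, h3, h4⟩ (by rw [hv]; simp)
    obtain ⟨_, hfval, hbool⟩ := code_some hv
    have hSf : bSS r = ((f : ℚ) : ℝ) := hbool.mp rfl
    set δ := min (ε/2) (r.1/2) with hδdef
    have hδ : 0 < δ := lt_min (by linarith) (by linarith)
    have hδ1 : δ ≤ ε/2 := min_le_left _ _
    have hδ2 : δ ≤ r.1/2 := min_le_right _ _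
    have hδp : δ < r.1 := by linarith
    have hlt : bSS (r.1 - δ, r.2 + δ) < bSS r := by
      have := bSS_perturb hδ hδp h2 h3
      have he : (r.1, r.2) = r := Prod.ext rfl rfl
      rwa [he] at this
    have hmem' : (r.1 - δ, r.2 + δ) ∈ bacT := by
      refine ⟨by simp; linarith, by simp; linarith, by simp; linarith, ?_⟩
      intro hc
      have : r.1 - δ = 0 := congrArg Prod.fst hc
      linarith
    refine ⟨(r.1 - δ, r.2 + δ), hmem', ?_, ?_⟩
    · rw [Prod.dist_eq]
      simp only
      rw [Real.dist_eq, Real.dist_eq]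
      rw [show r.1 - δ - r.1 = -δ by ring, show r.2 + δ - r.2 = δ by ring]
      rw [abs_neg, abs_of_pos hδ]
      apply max_lt <;> linarith
    · rw [hv]
      intro hc
      obtain ⟨_, hf2, hb2⟩ := code_some hc
      have : bSS (r.1 - δ, r.2 + δ) = ((f : ℚ) : ℝ) := hb2.mp rfl
      rw [this, ← hSf] at hlt
      exact absurd hlt (lt_irrefl _)

/-! ### fibers and realization -/

def fiber (n : ℕ) (v : Option (ℚ × Bool)) : Set (ℝ × ℝ) := {r | r ∈ bacT ∧ code n r = v}

def codes (n : ℕ) : Finset (Option (ℚ × Bool)) :=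
  insert none (((fracs n) ×ˢ (Finset.univ : Finset Bool)).image some)

lemma eqClass_fiber {n : ℕ} {pq : ℝ × ℝ} (h : pq ∈ bacT) (hn : 2 ≤ n) :
    eqClass n pq = fiber n (code n pq) := by
  ext r
  unfold eqClass fiber
  simp only [Set.mem_setOf_eq, Set.mem_sep_iff]
  constructor
  · rintro ⟨hr, hE⟩
    exact ⟨hr, ((nEquiv_iff_code h hr hn).mp hE).symm⟩
  · rintro ⟨hr, hc⟩
    exact ⟨hr, (nEquiv_iff_code h hr hn).mpr hc.symm⟩

lemma code_mem_codes {n : ℕ} {pq : ℝ × ℝ} (h : pq ∈ bacT) (hn : 2 ≤ n) :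
    code n pq ∈ codes n := by
  classical
  unfold codes
  rcases eq_or_lt_of_le h.1 with hp | hp
  · rw [(code_none_iff pq).mpr hp.symm]
    exact Finset.mem_insert_self _ _
  · apply Finset.mem_insert_of_mem
    rw [Finset.mem_image]
    obtain ⟨hS0, hS1⟩ := bSS_mem h hp
    refine ⟨(leastGE n (bSS pq),
      if bSS pq = ((leastGE n (bSS pq) : ℚ) : ℝ) then true else false), ?_, ?_⟩
    · rw [Finset.mem_product]
      exact ⟨(leastGE_spec hn hS1).1, Finset.mem_univ _⟩
    · unfold code
      rw [if_neg (ne_of_gt hp)]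
  
lemma leastGE_eq_of {n : ℕ} (hn : 2 ≤ n) {f : ℚ} (hf : f ∈ fracs n) {S : ℝ} (hS1 : S ≤ 1)
    (hSle : S ≤ ((f:ℚ):ℝ)) (hlow : ∀ g ∈ fracs n, g < f → ((g:ℚ):ℝ) < S) :
    leastGE n S = f := by
  obtain ⟨hmem, hSm, hmin⟩ := leastGE_spec (n := n) hn hS1
  apply le_antisymm (hmin f hf hSle)
  by_contra hlt
  push_neg at hlt
  have := hlow _ hmem hlt
  linarith

lemma realize {n : ℕ} (hn : 2 ≤ n) : ∀ v ∈ codes n, ∃ pq ∈ bacT, code n pq = v := by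
  classical
  intro v hv
  unfold codes at hv
  rcases Finset.mem_insert.mp hv with hv | hv
  · refine ⟨((0:ℝ), (1/2 : ℝ)), ⟨by norm_num, by norm_num, by norm_num, ?_⟩, ?_⟩
    · intro hc
      have : (1/2 : ℝ) = 0 := congrArg Prod.snd hc
      norm_num at this
    · rw [hv, code_none_iff]
  · rw [Finset.mem_image] at hv
    obtain ⟨⟨f, bl⟩, hmem, rfl⟩ := hv
    rw [Finset.mem_product] at hmem
    have hf : f ∈ fracs n := hmem.1
    obtain ⟨hf0, hf1⟩ := fracs_pos hf
    cases bl
    · -- false : realize a value strictly between lowf f and f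
      obtain ⟨hl0, hlf, hlmax, _⟩ := lowf_spec hf
      set w : ℚ := (lowf n f + f)/2 with hwdef
      have hw0 : 0 < w := by rw [hwdef]; linarith
      have hwf : w < f := by rw [hwdef]; linarith
      have hlw : lowf n f < w := by rw [hwdef]; linarith
      have hw1 : ((w:ℚ):ℝ) ≤ 1 := by
        have : w ≤ 1 := le_of_lt (lt_of_lt_of_le hwf hf1)
        exact_mod_cast this
      obtain ⟨pq, hpqT, hpqp, hpqS⟩ := exists_bSS (v := ((w:ℚ):ℝ)) (by exact_mod_cast hw0) hw1
      refine ⟨pq, hpqT, ?_⟩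
      unfold code
      rw [if_neg (ne_of_gt hpqp)]
      have hle : leastGE n (bSS pq) = f := by
        apply leastGE_eq_of hn hf (by rw [hpqS]; exact hw1)
        · rw [hpqS]; exact_mod_cast le_of_lt hwf
        · intro g hg hgf
          rw [hpqS]
          have : g ≤ lowf n f := hlmax g hg hgf
          have : g < w := lt_of_le_of_lt this hlw
          exact_mod_cast this
      rw [hle]
      have hne : bSS pq ≠ ((f:ℚ):ℝ) := by
        rw [hpqS]
        intro hc
        have : w = f := by exact_mod_cast hc
        exact absurd this (ne_of_lt hwf)
      rw [if_neg hne]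
    · -- true : realize the value f itself
      have hf1' : ((f:ℚ):ℝ) ≤ 1 := by exact_mod_cast hf1
      obtain ⟨pq, hpqT, hpqp, hpqS⟩ := exists_bSS (v := ((f:ℚ):ℝ)) (by exact_mod_cast hf0) hf1'
      refine ⟨pq, hpqT, ?_⟩
      unfold code
      rw [if_neg (ne_of_gt hpqp)]
      have hle : leastGE n (bSS pq) = f := by
        apply leastGE_eq_of hn hf (by rw [hpqS]; exact hf1')
        · rw [hpqS]
        · intro g hg hgf
          rw [hpqS]
          exact_mod_cast hgf
      rw [hle, if_pos (by rw [hpqS])]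

lemma fiber_injOn {n : ℕ} (hn : 2 ≤ n) : Set.InjOn (fiber n) ↑(codes n) := by
  intro v hv w hw hvw
  obtain ⟨pq, hpq, hcode⟩ := realize hn v (Finset.mem_coe.mp hv)
  have h1 : pq ∈ fiber n v := ⟨hpq, hcode⟩
  rw [hvw] at h1
  rw [← hcode, h1.2]

lemma fiber_false_open {n : ℕ} (hn : 2 ≤ n) {f : ℚ} (hf : f ∈ fracs n) :
    ∃ U : Set (ℝ × ℝ), IsOpen U ∧ fiber n (some (f, false)) = U ∩ bacT := by
  classical
  obtain ⟨hl0, hlf, hlmax, hlmem⟩ := lowf_spec hf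
  set U := oset ∩ bSS ⁻¹' (Set.Ioo ((lowf n f : ℚ):ℝ) ((f:ℚ):ℝ)) with hUdef
  have hU : IsOpen U := bSS_contOn.isOpen_inter_preimage oset_open isOpen_Ioo
  refine ⟨U, hU, ?_⟩
  ext r
  constructor
  · rintro ⟨hrT, hrc⟩
    obtain ⟨hne0, hfval, hbool⟩ := code_some hrc
    have hp : 0 < r.1 := code_pos hrT (by rw [hrc]; simp)
    obtain ⟨hS0, hS1⟩ := bSS_mem hrT hp
    obtain ⟨hmm, hSm, hmin⟩ := leastGE_spec (n := n) hn hS1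
    have hSlef : bSS r ≤ ((f:ℚ):ℝ) := by
      rw [hfval]
      exact hSm
    have hSnef : bSS r ≠ ((f:ℚ):ℝ) := by
      intro hc
      have := hbool.mpr hc
      exact absurd this (by decide)
    have hSltf : bSS r < ((f:ℚ):ℝ) := lt_of_le_of_ne hSlef hSnef
    have hlowlt : ((lowf n f : ℚ):ℝ) < bSS r := by
      rcases hlmem with hz | hm
      · rw [hz]; exact_mod_cast hS0
      · apply leastGE_lt hn hS1 hm
        rw [← hfval]
        exact hlf
    refine ⟨⟨⟨hp, bacT_q_pos hrT, hrT.2.2.1⟩, ?_⟩, hrT⟩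
    exact ⟨hlowlt, hSltf⟩
  · rintro ⟨⟨hO, hpre⟩, hrT⟩
    have hp : 0 < r.1 := hO.1
    obtain ⟨hS0, hS1⟩ := bSS_mem hrT hp
    obtain ⟨hpre1, hpre2⟩ := hpre
    refine ⟨hrT, ?_⟩
    unfold code
    rw [if_neg (ne_of_gt hp)]
    have hle : leastGE n (bSS r) = f := by
      apply leastGE_eq_of hn hf hS1 (le_of_lt hpre2)
      intro g hg hgf
      have : g ≤ lowf n f := hlmax g hg hgf
      have hcast : ((g:ℚ):ℝ) ≤ ((lowf n f : ℚ):ℝ) := by exact_mod_cast this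
      linarith
    rw [hle, if_neg (ne_of_lt hpre2)]

/-! placeholder -/
theorem stmt9 (n : ℕ) (hn : 2 ≤ n) :
    {C : Set (ℝ × ℝ) | ∃ pq ∈ bacT, C = eqClass n pq}.ncard
        = 3 + ∑ k ∈ Finset.Icc 3 n, Nat.totient k ∧
    2 * {C : Set (ℝ × ℝ) | (∃ pq ∈ bacT, C = eqClass n pq) ∧
          ∃ U : Set (ℝ × ℝ), IsOpen U ∧ C = U ∩ bacT}.ncard
        = 2 + ∑ k ∈ Finset.Icc 3 n, Nat.totient k ∧
    2 * {C : Set (ℝ × ℝ) | (∃ pq ∈ bacT, C = eqClass n pq) ∧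
          ∀ U : Set (ℝ × ℝ), IsOpen U → U ∩ bacT ⊆ C → U ∩ bacT = ∅}.ncard
        = 4 + ∑ k ∈ Finset.Icc 3 n, Nat.totient k := by
  classical
  have hF : 2 * (fracs n).card = 2 + ∑ k ∈ Finset.Icc 3 n, Nat.totient k := by
    rw [card_fracs]; exact two_mul_card_fpairs hn
  set SC : Finset (Option (ℚ × Bool)) := (fracs n).image (fun f => some (f, false)) with hSCdef
  set UC : Finset (Option (ℚ × Bool)) :=
    insert none ((fracs n).image (fun f => some (f, true))) with hUCdef
  have hSCsub : SC ⊆ codes n := by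
    intro v hv
    rw [hSCdef, Finset.mem_image] at hv
    obtain ⟨f, hf, rfl⟩ := hv
    unfold codes
    apply Finset.mem_insert_of_mem
    rw [Finset.mem_image]
    exact ⟨(f, false), Finset.mem_product.mpr ⟨hf, Finset.mem_univ _⟩, rfl⟩
  have hUCsub : UC ⊆ codes n := by
    intro v hv
    rw [hUCdef] at hv
    rcases Finset.mem_insert.mp hv with hv | hv
    · rw [hv]; exact Finset.mem_insert_self _ _
    · rw [Finset.mem_image] at hv
      obtain ⟨f, hf, rfl⟩ := hv
      unfold codes
      apply Finset.mem_insert_of_mem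
      rw [Finset.mem_image]
      exact ⟨(f, true), Finset.mem_product.mpr ⟨hf, Finset.mem_univ _⟩, rfl⟩
  -- the classes are the fibers of the realized codes
  have hE1 : {C : Set (ℝ × ℝ) | ∃ pq ∈ bacT, C = eqClass n pq} = fiber n '' ↑(codes n) := by
    ext C
    simp only [Set.mem_setOf_eq, Set.mem_image, Finset.mem_coe]
    constructor
    · rintro ⟨pq, hpq, rfl⟩
      exact ⟨code n pq, code_mem_codes hpq hn, (eqClass_fiber hpq hn).symm⟩
    · rintro ⟨v, hv, rfl⟩
      obtain ⟨pq, hpq, hcode⟩ := realize hn v hv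
      exact ⟨pq, hpq, by rw [eqClass_fiber hpq hn, hcode]⟩
  have hE2 : {C : Set (ℝ × ℝ) | (∃ pq ∈ bacT, C = eqClass n pq) ∧
      ∃ U : Set (ℝ × ℝ), IsOpen U ∧ C = U ∩ bacT} = fiber n '' ↑SC := by
    ext C
    simp only [Set.mem_setOf_eq, Set.mem_image, Finset.mem_coe]
    constructor
    · rintro ⟨⟨pq, hpq, rfl⟩, U, hU, hCU⟩
      have hself : pq ∈ eqClass n pq := by
        rw [eqClass_fiber hpq hn]; exact ⟨hpq, rfl⟩
      have hexc : ¬ (code n pq = none ∨ (∃ f : ℚ, code n pq = some (f, true))) := by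
        intro hv
        have hpqU : pq ∈ U := by rw [hCU] at hself; exact hself.1
        obtain ⟨ε, hε, hball⟩ := Metric.isOpen_iff.mp hU pq hpqU
        obtain ⟨r', hr'T, hr'd, hr'c⟩ := pert hpq hn hv ε hε
        have hr'C : r' ∈ eqClass n pq := by
          rw [hCU]; exact ⟨hball (by rwa [Metric.mem_ball]), hr'T⟩
        rw [eqClass_fiber hpq hn] at hr'C
        exact hr'c hr'C.2
      have hcm := code_mem_codes hpq hn
      unfold codes at hcm
      rcases Finset.mem_insert.mp hcm with hv | hv
      · exact absurd (Or.inl hv) hexc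
      · rw [Finset.mem_image] at hv
        obtain ⟨⟨f, bl⟩, hfb, hcode⟩ := hv
        rw [Finset.mem_product] at hfb
        cases bl
        · refine ⟨some (f, false), ?_, ?_⟩
          · rw [hSCdef, Finset.mem_image]; exact ⟨f, hfb.1, rfl⟩
          · rw [eqClass_fiber hpq hn, ← hcode]
        · exact absurd (Or.inr ⟨f, hcode.symm⟩) hexc
    · rintro ⟨v, hv, rfl⟩
      obtain ⟨pq, hpq, hcode⟩ := realize hn v (hSCsub hv)
      constructor
      · exact ⟨pq, hpq, by rw [eqClass_fiber hpq hn, hcode]⟩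
      · rw [hSCdef, Finset.mem_image] at hv
        obtain ⟨f, hf, rfl⟩ := hv
        exact fiber_false_open hn hf
  have hE3 : {C : Set (ℝ × ℝ) | (∃ pq ∈ bacT, C = eqClass n pq) ∧
      ∀ U : Set (ℝ × ℝ), IsOpen U → U ∩ bacT ⊆ C → U ∩ bacT = ∅} = fiber n '' ↑UC := by
    ext C
    simp only [Set.mem_setOf_eq, Set.mem_image, Finset.mem_coe]
    constructor
    · rintro ⟨⟨pq, hpq, rfl⟩, hprop⟩
      have hself : pq ∈ eqClass n pq := by
        rw [eqClass_fiber hpq hn]; exact ⟨hpq, rfl⟩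
      have hcm := code_mem_codes hpq hn
      unfold codes at hcm
      rcases Finset.mem_insert.mp hcm with hv | hv
      · refine ⟨none, ?_, ?_⟩
        · rw [hUCdef]; exact Finset.mem_insert_self _ _
        · rw [eqClass_fiber hpq hn, hv]
      · rw [Finset.mem_image] at hv
        obtain ⟨⟨f, bl⟩, hfb, hcode⟩ := hv
        rw [Finset.mem_product] at hfb
        cases bl
        · exfalso
          obtain ⟨U, hU, hfibU⟩ := fiber_false_open hn hfb.1
          have hCU : eqClass n pq = U ∩ bacT := by
            rw [eqClass_fiber hpq hn, ← hcode, hfibU]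
          have := hprop U hU (by rw [← hCU])
          rw [← hCU] at this
          rw [this] at hself
          exact hself
        · refine ⟨some (f, true), ?_, ?_⟩
          · rw [hUCdef]
            apply Finset.mem_insert_of_mem
            rw [Finset.mem_image]
            exact ⟨f, hfb.1, rfl⟩
          · rw [eqClass_fiber hpq hn, ← hcode]
    · rintro ⟨v, hv, rfl⟩
      obtain ⟨pq, hpq, hcode⟩ := realize hn v (hUCsub hv)
      constructor
      · exact ⟨pq, hpq, by rw [eqClass_fiber hpq hn, hcode]⟩
      · intro U hUopen hsub
        by_contra hne
        obtain ⟨r, hrU, hrT⟩ := Set.nonempty_iff_ne_empty.mpr hne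
        have hrC : r ∈ fiber n v := hsub ⟨hrU, hrT⟩
        have hcodev : code n r = v := hrC.2
        have hv' : code n r = none ∨ ∃ f : ℚ, code n r = some (f, true) := by
          rw [hUCdef] at hv
          rcases Finset.mem_insert.mp hv with h | h
          · left; rw [hcodev, h]
          · right
            rw [Finset.mem_image] at h
            obtain ⟨f, hf, rfl⟩ := h
            exact ⟨f, hcodev⟩
        obtain ⟨ε, hε, hball⟩ := Metric.isOpen_iff.mp hUopen r hrU
        obtain ⟨r', hr'T, hr'd, hr'c⟩ := pert hrT hn hv' ε hε
        have hr'C : r' ∈ fiber n v := hsub ⟨hball (by rwa [Metric.mem_ball]), hr'T⟩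
        rw [← hcodev] at hr'C
        exact hr'c hr'C.2
  -- cardinalities
  have hnone1 : (none : Option (ℚ × Bool)) ∉ ((fracs n) ×ˢ (Finset.univ : Finset Bool)).image some := by
    simp
  have hnone2 : (none : Option (ℚ × Bool)) ∉ (fracs n).image (fun f => some (f, true)) := by
    simp
  have hcard1 : (codes n).card = 1 + 2 * (fracs n).card := by
    unfold codes
    rw [Finset.card_insert_of_notMem hnone1,
      Finset.card_image_of_injective _ (Option.some_injective _),
      Finset.card_product, Finset.card_univ, Fintype.card_bool]
    ring
  have hcard2 : SC.card = (fracs n).card := by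
    rw [hSCdef]
    apply Finset.card_image_of_injective
    intro a b hab
    simpa using hab
  have hcard3 : UC.card = 1 + (fracs n).card := by
    rw [hUCdef, Finset.card_insert_of_notMem hnone2]
    rw [Finset.card_image_of_injective]
    · ring
    · intro a b hab
      simpa using hab
  rw [hE1, hE2, hE3]
  rw [Set.ncard_image_of_injOn (fiber_injOn hn),
    Set.ncard_image_of_injOn ((fiber_injOn hn).mono (Finset.coe_subset.mpr hSCsub)),
    Set.ncard_image_of_injOn ((fiber_injOn hn).mono (Finset.coe_subset.mpr hUCsub))]
  rw [Set.ncard_coe_finset, Set.ncard_coe_finset, Set.ncard_coe_finset]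
  rw [hcard1, hcard2, hcard3]
  omega
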